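/- (Vector-valued power-weighted Birman inequality) Let H be a complex separable Hilbert space, m ∈ ℕ with m ≥ 1, α ∈ ℝ with α ∉ {2j-1 : 1 ≤ j ≤ m}, and 0 ≤ a < b ≤ ∞. Then for every f ∈ C₀^∞((a,b); H), ∫_a^b x^α ‖f^{(m)}(x)‖²_H dx ≥ A(m,α) ∫_a^b x^{α-2m} ‖f(x)‖²_H dx, with equality if and only if f = 0 on (a,b). -/

import Mathlib

open MeasureTheory Set Filter RCLike
open scoped Topology ContDiff

set_option linter.unusedSectionVars false
set_option maxHeartbeats 1000000

namespace BirmanAux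

variable {H : Type*} [NormedAddCommGroup H] [InnerProductSpace ℂ H]
variable {E : Type*} [NormedAddCommGroup E] [NormedSpace ℝ E]

local notation "⟪" x ", " y "⟫" => @inner ℂ _ _ x y

lemma aux_exists_bounds (g : ℝ → E) (hs : HasCompactSupport g)
    (hpos : tsupport g ⊆ Set.Ioi 0) :
    ∃ c d : ℝ, 0 < c ∧ c < d ∧ tsupport g ⊆ Set.Ioo c d := by
  rcases (tsupport g).eq_empty_or_nonempty with h | h
  · exact ⟨1, 2, one_pos, one_lt_two, h ▸ Set.empty_subset _⟩
  · have hcpt : IsCompact (tsupport g) := hs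
    have h1 : sInf (tsupport g) ∈ tsupport g := hcpt.sInf_mem h
    have h2 : sSup (tsupport g) ∈ tsupport g := hcpt.sSup_mem h
    have hp : 0 < sInf (tsupport g) := hpos h1
    refine ⟨sInf (tsupport g) / 2, sSup (tsupport g) + 1, by linarith, ?_, ?_⟩
    · have : sInf (tsupport g) ≤ sSup (tsupport g) := csInf_le_csSup h hcpt.bddBelow hcpt.bddAbove
      linarith
    · intro x hx
      have hl : sInf (tsupport g) ≤ x := csInf_le hcpt.bddBelow hx
      have hu : x ≤ sSup (tsupport g) := le_csSup hcpt.bddAbove hx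
      exact ⟨by linarith, by linarith⟩

lemma aux_cont_rpow_smul (β : ℝ) (g : ℝ → E) (hg : Continuous g)
    (hpos : tsupport g ⊆ Set.Ioi 0) :
    Continuous fun x : ℝ => x ^ β • g x := by
  rw [continuous_iff_continuousAt]
  intro x
  by_cases hx : x ∈ tsupport g
  · have hx0 : (0 : ℝ) < x := hpos hx
    exact (Real.continuousAt_rpow_const x β (Or.inl hx0.ne')).smul hg.continuousAt
  · have hmem : (tsupport g)ᶜ ∈ 𝓝 x := (isClosed_tsupport g).isOpen_compl.mem_nhds hx
    have heq : (fun x : ℝ => x ^ β • g x) =ᶠ[𝓝 x] fun _ => (0 : E) := by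
      filter_upwards [hmem] with y hy
      simp [image_eq_zero_of_notMem_tsupport hy]
    exact ContinuousAt.congr continuousAt_const heq.symm

lemma aux_ts_subset {F : ℝ → E} {G : ℝ → H} (h : ∀ x, x ∉ tsupport G → F x = 0) :
    tsupport F ⊆ tsupport G :=
  closure_minimal (fun x hx => by_contra fun hc => hx (h x hc)) (isClosed_tsupport G)

lemma aux_integrable_rpow_smul (β : ℝ) (g : ℝ → E) (hg : Continuous g)
    (hs : HasCompactSupport g) (hpos : tsupport g ⊆ Set.Ioi 0) :
    Integrable fun x : ℝ => x ^ β • g x := by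
  apply (aux_cont_rpow_smul β g hg hpos).integrable_of_hasCompactSupport
  apply hs.mono'
  intro x hx
  by_contra hc
  exact hx (by simp [image_eq_zero_of_notMem_tsupport hc] : x ^ β • g x = 0)

lemma aux_integrable_rpow_mul {G : ℝ → H} (β : ℝ) (F : ℝ → ℝ) (hF : Continuous F)
    (hGs : HasCompactSupport G) (hGpos : tsupport G ⊆ Set.Ioi 0)
    (h0 : ∀ x, x ∉ tsupport G → F x = 0) :
    Integrable fun x : ℝ => x ^ β * F x := by
  have hts : tsupport F ⊆ tsupport G := aux_ts_subset h0
  have hs : HasCompactSupport F := hGs.mono' ((subset_closure).trans hts)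
  simpa [smul_eq_mul] using
    aux_integrable_rpow_smul β F hF hs (hts.trans hGpos)

lemma aux_hasDerivAt_norm_sq (g : ℝ → H) (g' : H) (x : ℝ) (hg : HasDerivAt g g' x) :
    HasDerivAt (fun y => ‖g y‖ ^ 2) (2 * re ⟪g', g x⟫) x := by
  have h1 : HasDerivAt (fun y => ⟪g y, g y⟫) (⟪g x, g'⟫ + ⟪g', g x⟫) x := hg.inner ℂ hg
  have h2 := (reCLM (K := ℂ)).hasFDerivAt.comp_hasDerivAt x h1
  have h3 : HasDerivAt (fun y => re ⟪g y, g y⟫) (re (⟪g x, g'⟫ + ⟪g', g x⟫)) x := h2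
  have he : (fun y => re ⟪g y, g y⟫) = fun y => ‖g y‖ ^ 2 := by
    funext y; rw [inner_self_eq_norm_sq]
  rw [he] at h3
  convert h3 using 1
  rw [map_add, inner_re_symm]
  ring

lemma aux_deriv_zero {g : ℝ → H} {x : ℝ} (hx : x ∉ tsupport g) : deriv g x = 0 := by
  by_contra h
  exact hx (support_deriv_subset h)

lemma aux_ibp (γ : ℝ) (g : ℝ → H) (hg : ContDiff ℝ ∞ g) (hcs : HasCompactSupport g)
    (hpos : tsupport g ⊆ Set.Ioi 0) :
    ∫ x : ℝ, x ^ γ * re ⟪deriv g x, g x⟫ = -(γ / 2) * ∫ x : ℝ, x ^ (γ - 1) * ‖g x‖ ^ 2 := by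
  obtain ⟨c, d, hc, hcd, hK⟩ := aux_exists_bounds g hcs hpos
  have hdiff : Differentiable ℝ g := (contDiff_infty_iff_deriv.mp hg).1
  have hgc : Continuous g := hg.continuous
  have hg'c : Continuous (deriv g) := (contDiff_infty_iff_deriv.mp hg).2.continuous
  set v : ℝ → ℝ := fun x => γ * x ^ (γ - 1) * ‖g x‖ ^ 2 + x ^ γ * (2 * re ⟪deriv g x, g x⟫)
    with hv
  have key : ∀ x ∈ Set.Icc c d, HasDerivAt (fun y : ℝ => y ^ γ * ‖g y‖ ^ 2) (v x) x := by
    intro x hx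
    have hx0 : (0 : ℝ) < x := lt_of_lt_of_le hc hx.1
    have h1 : HasDerivAt (fun y : ℝ => y ^ γ) (γ * x ^ (γ - 1)) x :=
      Real.hasDerivAt_rpow_const (Or.inl hx0.ne')
    have h2 := aux_hasDerivAt_norm_sq g (deriv g x) x (hdiff x).hasDerivAt
    exact h1.mul h2
  have hrp : ∀ p : ℝ, ContinuousOn (fun x : ℝ => x ^ p) (Set.Icc c d) := fun p x hx =>
    (Real.continuousAt_rpow_const x p (Or.inl (lt_of_lt_of_le hc hx.1).ne')).continuousWithinAt
  have hinc : Continuous fun x => re ⟪deriv g x, g x⟫ :=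
    RCLike.continuous_re.comp (hg'c.inner hgc)
  have hvc : ContinuousOn v (Set.Icc c d) := by
    apply ContinuousOn.add
    · exact (continuousOn_const.mul (hrp (γ - 1))).mul ((hgc.norm.pow 2).continuousOn)
    · exact (hrp γ).mul (continuousOn_const.mul hinc.continuousOn)
  have hv0 : ∀ x, x ∉ Set.Ioc c d → v x = 0 := by
    intro x hx
    have hx' : x ∉ tsupport g := fun h => hx (Set.Ioo_subset_Ioc_self (hK h))
    have hgx : g x = 0 := image_eq_zero_of_notMem_tsupport hx'
    simp [hv, hgx]
  have hend : ∀ x : ℝ, x ∉ Set.Ioo c d → (fun y : ℝ => y ^ γ * ‖g y‖ ^ 2) x = 0 := by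
    intro x hx
    have : g x = 0 := image_eq_zero_of_notMem_tsupport (fun h => hx (hK h))
    simp [this]
  have hint : ∫ x : ℝ, v x = 0 := by
    rw [← setIntegral_eq_integral_of_forall_compl_eq_zero hv0,
      ← intervalIntegral.integral_of_le hcd.le]
    have := intervalIntegral.integral_eq_sub_of_hasDerivAt
      (f := fun y : ℝ => y ^ γ * ‖g y‖ ^ 2) (f' := v)
      (fun x hx => key x (by rwa [Set.uIcc_of_le hcd.le] at hx))
      ((hvc.mono (by rw [Set.uIcc_of_le hcd.le])).intervalIntegrable)
    rw [this, show c ^ γ * ‖g c‖ ^ 2 = 0 from hend c (by simp),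
      show d ^ γ * ‖g d‖ ^ 2 = 0 from hend d (by simp [hcd.le, hcd])]
    ring
  have hi1 : Integrable fun x : ℝ => x ^ (γ - 1) * ‖g x‖ ^ 2 :=
    aux_integrable_rpow_mul (γ - 1) _ (hgc.norm.pow 2) hcs hpos
      (fun x hx => by simp [image_eq_zero_of_notMem_tsupport hx])
  have hi2 : Integrable fun x : ℝ => x ^ γ * re ⟪deriv g x, g x⟫ :=
    aux_integrable_rpow_mul γ _ hinc hcs hpos
      (fun x hx => by simp [image_eq_zero_of_notMem_tsupport hx])
  have hsplit : ∫ x : ℝ, v x =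
      γ * (∫ x : ℝ, x ^ (γ - 1) * ‖g x‖ ^ 2) + 2 * ∫ x : ℝ, x ^ γ * re ⟪deriv g x, g x⟫ := by
    rw [← MeasureTheory.integral_const_mul, ← MeasureTheory.integral_const_mul,
      ← integral_add (hi1.const_mul γ) (hi2.const_mul 2)]
    congr 1
    funext x
    simp [hv]
    ring
  rw [hsplit] at hint
  linarith

lemma aux_expand (β : ℝ) (g : ℝ → H) (g' : H) (x : ℝ) (hx0 : 0 < x) :
    ‖(x ^ (β/2)) • g' - ((1 - β)/2 * x ^ (β/2 - 1)) • g x‖ ^ 2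
      = x ^ β * ‖g'‖ ^ 2 - (1 - β) * (x ^ (β - 1) * re ⟪g', g x⟫)
        + ((1 - β)/2) ^ 2 * (x ^ (β - 2) * ‖g x‖ ^ 2) := by
  have hpow1 : (x ^ (β/2)) ^ 2 = x ^ β := by
    rw [← Real.rpow_natCast (x ^ (β/2)) 2, ← Real.rpow_mul hx0.le]
    norm_num
  have hpow2 : x ^ (β/2) * x ^ (β/2 - 1) = x ^ (β - 1) := by
    rw [← Real.rpow_add hx0]; ring_nf
  have hpow3 : (x ^ (β/2 - 1)) ^ 2 = x ^ (β - 2) := by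
    rw [← Real.rpow_natCast (x ^ (β/2 - 1)) 2, ← Real.rpow_mul hx0.le]
    norm_num; ring_nf
  have hns := norm_sub_sq (𝕜 := ℂ) ((x ^ (β/2)) • g') (((1 - β)/2 * x ^ (β/2 - 1)) • g x)
  rw [hns]
  have e1 : ‖(x ^ (β/2)) • g'‖ ^ 2 = x ^ β * ‖g'‖ ^ 2 := by
    rw [norm_smul, mul_pow, Real.norm_eq_abs, sq_abs]
    linear_combination ‖g'‖ ^ 2 * hpow1
  have e2 : re ⟪(x ^ (β/2)) • g', ((1 - β)/2 * x ^ (β/2 - 1)) • g x⟫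
      = (1 - β)/2 * (x ^ (β - 1) * re ⟪g', g x⟫) := by
    rw [RCLike.real_smul_eq_coe_smul (K := ℂ), RCLike.real_smul_eq_coe_smul (K := ℂ),
      inner_smul_left, inner_smul_right, conj_ofReal, ← mul_assoc, ← ofReal_mul,
      re_ofReal_mul]
    linear_combination ((1 - β)/2 * re ⟪g', g x⟫) * hpow2
  have e3 : ‖((1 - β)/2 * x ^ (β/2 - 1)) • g x‖ ^ 2
      = ((1 - β)/2) ^ 2 * (x ^ (β - 2) * ‖g x‖ ^ 2) := by
    rw [norm_smul, mul_pow, Real.norm_eq_abs, sq_abs]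
    linear_combination (((1 - β)/2) ^ 2 * ‖g x‖ ^ 2) * hpow3
  rw [e1, e2, e3]
  ring

lemma aux_step (β : ℝ) (g : ℝ → H) (hg : ContDiff ℝ ∞ g) (hcs : HasCompactSupport g)
    (hpos : tsupport g ⊆ Set.Ioi 0) :
    (∫ x : ℝ, x ^ β * ‖deriv g x‖ ^ 2) - ((β - 1)/2) ^ 2 * ∫ x : ℝ, x ^ (β - 2) * ‖g x‖ ^ 2
      = ∫ x : ℝ, ‖(x ^ (β/2)) • deriv g x - ((1 - β)/2 * x ^ (β/2 - 1)) • g x‖ ^ 2 := by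
  have hgc : Continuous g := hg.continuous
  have hg'c : Continuous (deriv g) := (contDiff_infty_iff_deriv.mp hg).2.continuous
  have hptwise : ∀ x : ℝ,
      ‖(x ^ (β/2)) • deriv g x - ((1 - β)/2 * x ^ (β/2 - 1)) • g x‖ ^ 2
        = x ^ β * ‖deriv g x‖ ^ 2 - (1 - β) * (x ^ (β - 1) * re ⟪deriv g x, g x⟫)
          + ((1 - β)/2) ^ 2 * (x ^ (β - 2) * ‖g x‖ ^ 2) := by
    intro x
    by_cases hx : x ∈ tsupport g
    · exact aux_expand β g (deriv g x) x (hpos hx)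
    · have hgx : g x = 0 := image_eq_zero_of_notMem_tsupport hx
      have hgx' : deriv g x = 0 := aux_deriv_zero hx
      simp [hgx, hgx']
  have hiA : Integrable fun x : ℝ => x ^ β * ‖deriv g x‖ ^ 2 :=
    aux_integrable_rpow_mul β _ (hg'c.norm.pow 2) hcs hpos
      (fun x hx => by simp [aux_deriv_zero hx])
  have hiB : Integrable fun x : ℝ => x ^ (β - 1) * re ⟪deriv g x, g x⟫ :=
    aux_integrable_rpow_mul (β - 1) _ (RCLike.continuous_re.comp (hg'c.inner hgc)) hcs hpos
      (fun x hx => by simp [image_eq_zero_of_notMem_tsupport hx])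
  have hiC : Integrable fun x : ℝ => x ^ (β - 2) * ‖g x‖ ^ 2 :=
    aux_integrable_rpow_mul (β - 2) _ (hgc.norm.pow 2) hcs hpos
      (fun x hx => by simp [image_eq_zero_of_notMem_tsupport hx])
  have hibp := aux_ibp (β - 1) g hg hcs hpos
  rw [show β - 1 - 1 = β - 2 by ring] at hibp
  have hsplit : (∫ x : ℝ,
      ‖(x ^ (β/2)) • deriv g x - ((1 - β)/2 * x ^ (β/2 - 1)) • g x‖ ^ 2)
      = (∫ x : ℝ, x ^ β * ‖deriv g x‖ ^ 2)
        - (1 - β) * (∫ x : ℝ, x ^ (β - 1) * re ⟪deriv g x, g x⟫)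
        + ((1 - β)/2) ^ 2 * ∫ x : ℝ, x ^ (β - 2) * ‖g x‖ ^ 2 := by
    calc (∫ x : ℝ, ‖(x ^ (β/2)) • deriv g x - ((1 - β)/2 * x ^ (β/2 - 1)) • g x‖ ^ 2)
        = ∫ x : ℝ, ((x ^ β * ‖deriv g x‖ ^ 2
            - (1 - β) * (x ^ (β - 1) * re ⟪deriv g x, g x⟫))
            + ((1 - β)/2) ^ 2 * (x ^ (β - 2) * ‖g x‖ ^ 2)) := by
          congr 1
          funext x
          rw [hptwise x]
      _ = (∫ x : ℝ, (x ^ β * ‖deriv g x‖ ^ 2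
            - (1 - β) * (x ^ (β - 1) * re ⟪deriv g x, g x⟫)))
            + ∫ x : ℝ, ((1 - β)/2) ^ 2 * (x ^ (β - 2) * ‖g x‖ ^ 2) :=
          integral_add (hiA.sub (hiB.const_mul (1 - β))) (hiC.const_mul (((1 - β)/2) ^ 2))
      _ = ((∫ x : ℝ, x ^ β * ‖deriv g x‖ ^ 2)
            - ∫ x : ℝ, (1 - β) * (x ^ (β - 1) * re ⟪deriv g x, g x⟫))
            + ((1 - β)/2) ^ 2 * ∫ x : ℝ, x ^ (β - 2) * ‖g x‖ ^ 2 := by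
          rw [integral_sub hiA (hiB.const_mul (1 - β))]
          simp only [MeasureTheory.integral_const_mul]
      _ = (∫ x : ℝ, x ^ β * ‖deriv g x‖ ^ 2)
            - (1 - β) * (∫ x : ℝ, x ^ (β - 1) * re ⟪deriv g x, g x⟫)
            + ((1 - β)/2) ^ 2 * ∫ x : ℝ, x ^ (β - 2) * ‖g x‖ ^ 2 := by
          have e1 := MeasureTheory.integral_const_mul (μ := volume) (1 - β)
            (fun x : ℝ => x ^ (β - 1) * re ⟪deriv g x, g x⟫)
          linarith [e1]
  rw [hsplit, hibp]
  ring

lemma aux_step_ge (β : ℝ) (g : ℝ → H) (hg : ContDiff ℝ ∞ g) (hcs : HasCompactSupport g)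
    (hpos : tsupport g ⊆ Set.Ioi 0) :
    ((β - 1)/2) ^ 2 * (∫ x : ℝ, x ^ (β - 2) * ‖g x‖ ^ 2)
      ≤ ∫ x : ℝ, x ^ β * ‖deriv g x‖ ^ 2 := by
  have h := aux_step β g hg hcs hpos
  have h2 : 0 ≤ ∫ x : ℝ,
      ‖(x ^ (β/2)) • deriv g x - ((1 - β)/2 * x ^ (β/2 - 1)) • g x‖ ^ 2 :=
    integral_nonneg fun x => by positivity
  linarith

lemma aux_step_strict (β : ℝ) (g : ℝ → H) (hg : ContDiff ℝ ∞ g) (hcs : HasCompactSupport g)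
    (hpos : tsupport g ⊆ Set.Ioi 0) (hne : g ≠ 0) :
    ((β - 1)/2) ^ 2 * (∫ x : ℝ, x ^ (β - 2) * ‖g x‖ ^ 2)
      < ∫ x : ℝ, x ^ β * ‖deriv g x‖ ^ 2 := by
  have hgc : Continuous g := hg.continuous
  have hg'c : Continuous (deriv g) := (contDiff_infty_iff_deriv.mp hg).2.continuous
  have hdiff : Differentiable ℝ g := (contDiff_infty_iff_deriv.mp hg).1
  set F : ℝ → H := fun x =>
    (x ^ (β/2)) • deriv g x - ((1 - β)/2 * x ^ (β/2 - 1)) • g x with hF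
  have hstep := aux_step β g hg hcs hpos
  have hnn : 0 ≤ ∫ x : ℝ, ‖F x‖ ^ 2 := integral_nonneg fun x => by positivity
  rcases lt_or_eq_of_le hnn with hpos' | hzero
  · linarith
  exfalso
  -- F is continuous
  have hts' : tsupport (deriv g) ⊆ Set.Ioi 0 :=
    (closure_minimal support_deriv_subset (isClosed_tsupport g)).trans hpos
  have hts'' : tsupport (fun x => ((1 - β)/2) • g x) ⊆ Set.Ioi 0 :=
    (aux_ts_subset (fun x hx => by
      simp [image_eq_zero_of_notMem_tsupport hx])).trans hpos
  have hFc : Continuous F := by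
    have c1 := aux_cont_rpow_smul (β/2) (deriv g) hg'c hts'
    have c2 := aux_cont_rpow_smul (β/2 - 1) (fun x => ((1 - β)/2) • g x)
      (hgc.const_smul _) hts''
    have := c1.sub c2
    convert this using 1
    funext x
    simp only [hF, Pi.sub_apply]
    rw [smul_smul, mul_comm (x ^ (β/2 - 1)) ((1 - β)/2)]
  have hF0 : ∀ x, x ∉ tsupport g → F x = 0 := by
    intro x hx
    simp [hF, image_eq_zero_of_notMem_tsupport hx, aux_deriv_zero hx]
  have hFcs : HasCompactSupport fun x => ‖F x‖ ^ 2 := by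
    apply hcs.mono'
    intro x hx
    by_contra hc
    exact hx (by simp [hF0 x hc])
  have hFint : Integrable fun x : ℝ => ‖F x‖ ^ 2 :=
    (hFc.norm.pow 2).integrable_of_hasCompactSupport hFcs
  have hae : (fun x : ℝ => ‖F x‖ ^ 2) =ᵐ[volume] 0 :=
    (integral_eq_zero_iff_of_nonneg (fun x => by positivity) hFint).mp hzero.symm
  have hFeq : ∀ x, F x = 0 := by
    have : (fun x : ℝ => ‖F x‖ ^ 2) = fun _ => (0 : ℝ) :=
      (Continuous.ae_eq_iff_eq volume (hFc.norm.pow 2) continuous_const).mp hae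
    intro x
    have hx := congrFun this x
    simpa using hx
  -- the ODE
  set cst : ℝ := (1 - β)/2 with hcst
  have hode : ∀ x : ℝ, 0 < x → deriv g x = (cst / x) • g x := by
    intro x hx
    have h0 : F x = 0 := hFeq x
    have hxs : (0 : ℝ) < x ^ (β/2) := Real.rpow_pos_of_pos hx _
    have h1 : (x ^ (β/2)) • deriv g x = (cst * x ^ (β/2 - 1)) • g x := by
      rw [sub_eq_zero] at h0
      · exact h0
    have := congrArg (fun v => (x ^ (β/2))⁻¹ • v) h1
    simp only [smul_smul, inv_mul_cancel₀ hxs.ne', one_smul] at this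
    rw [this]
    congr 1
    have hxinv : x ^ (β/2 - 1) * (x ^ (β/2))⁻¹ = x⁻¹ := by
      rw [← Real.rpow_neg hx.le, ← Real.rpow_add hx]
      rw [show β/2 - 1 + -(β/2) = -1 by ring, Real.rpow_neg_one]
    rw [mul_comm ((x ^ (β/2))⁻¹) (cst * x ^ (β/2 - 1)), mul_assoc, hxinv, ← div_eq_mul_inv]
  obtain ⟨c, d, hc, hcd, hK⟩ := aux_exists_bounds g hcs hpos
  have hzero' : ∀ y : ℝ, 0 < y → g y = 0 := by
    intro y hy
    set D : ℝ := max y d + 1 with hD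
    have hyD : y < D := by
      have h := le_max_left y d
      rw [hD]; linarith
    have hdD : d < D := by
      have h := le_max_right y d
      rw [hD]; linarith
    set h : ℝ → H := fun x => (x ^ (-cst)) • g x with hh
    have hder : ∀ x ∈ Set.Icc y D, HasDerivAt h 0 x := by
      intro x hx
      have hx0 : (0 : ℝ) < x := lt_of_lt_of_le hy hx.1
      have h1 : HasDerivAt (fun z : ℝ => z ^ (-cst)) (-cst * x ^ (-cst - 1)) x :=
        Real.hasDerivAt_rpow_const (Or.inl hx0.ne')
      have h2 := h1.smul (hdiff x).hasDerivAt
      have h3 : x ^ (-cst) • deriv g x + (-cst * x ^ (-cst - 1)) • g x = 0 := by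
        rw [hode x hx0, smul_smul, ← add_smul]
        convert zero_smul ℝ (g x)
        have hpw : x ^ (-cst) * x⁻¹ = x ^ (-cst - 1) := by
          rw [← Real.rpow_neg_one x, ← Real.rpow_add hx0]
          norm_num [sub_eq_add_neg]
        rw [div_eq_mul_inv, ← hpw]
        ring
      rw [h3] at h2
      exact h2
    have hcont : ContinuousOn h (Set.Icc y D) := fun x hx =>
      ((hder x hx).continuousAt).continuousWithinAt
    have hconst := constant_of_has_deriv_right_zero hcont
      (fun x hx => (hder x ⟨hx.1, hx.2.le⟩).hasDerivWithinAt)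
    have hDval : h D = h y := hconst D ⟨hyD.le, le_refl D⟩
    have hgD : g D = 0 := by
      apply image_eq_zero_of_notMem_tsupport
      intro hmem
      exact absurd (hK hmem).2 (by linarith)
    have hy0 : h y = 0 := by rw [← hDval, hh]; simp [hgD]
    have : (y ^ (-cst)) • g y = 0 := hy0
    rcases smul_eq_zero.mp this with h' | h'
    · exact absurd h' (Real.rpow_pos_of_pos hy _).ne'
    · exact h'
  apply hne
  funext x
  by_cases hx : 0 < x
  · exact hzero' x hx
  · exact image_eq_zero_of_notMem_tsupport fun hmem => hx (hpos hmem)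

lemma aux_tsupport_iteratedDeriv (m : ℕ) (f : ℝ → H) :
    tsupport (iteratedDeriv m f) ⊆ tsupport f := by
  induction m with
  | zero => rw [iteratedDeriv_zero]
  | succ n ih =>
    rw [iteratedDeriv_succ]
    exact closure_minimal (support_deriv_subset.trans ih) (isClosed_tsupport f)

lemma aux_main_ge (m : ℕ) (α : ℝ) :
    ∀ f : ℝ → H, ContDiff ℝ ∞ f → HasCompactSupport f → tsupport f ⊆ Set.Ioi 0 →
    (∏ j ∈ Finset.Icc 1 m, ((2 * (j : ℝ) - 1 - α) / 2) ^ 2)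
        * (∫ x : ℝ, x ^ (α - 2 * m) * ‖f x‖ ^ 2)
      ≤ ∫ x : ℝ, x ^ α * ‖iteratedDeriv m f x‖ ^ 2 := by
  induction m with
  | zero =>
    intro f hf hcs hpos
    simp [iteratedDeriv_zero]
  | succ n ih =>
    intro f hf hcs hpos
    have hf' : ContDiff ℝ ∞ (deriv f) := (contDiff_infty_iff_deriv.mp hf).2
    have hcs' : HasCompactSupport (deriv f) := hcs.deriv
    have hts' : tsupport (deriv f) ⊆ Set.Ioi 0 :=
      (closure_minimal support_deriv_subset (isClosed_tsupport f)).trans hpos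
    have hIH := ih (deriv f) hf' hcs' hts'
    have hst := aux_step_ge (α - 2 * n) f hf hcs hpos
    rw [show α - 2 * n - 2 = α - 2 * ((n : ℝ) + 1) by ring] at hst
    have hcoef : ((2 * ((n : ℝ) + 1) - 1 - α) / 2) ^ 2 = ((α - 2 * n - 1) / 2) ^ 2 := by
      rw [show (2 * ((n : ℝ) + 1) - 1 - α) / 2 = -((α - 2 * n - 1) / 2) by ring, neg_sq]
    have hprodsplit :
        (∏ j ∈ Finset.Icc 1 (n + 1), ((2 * (j : ℝ) - 1 - α) / 2) ^ 2)
          = (∏ j ∈ Finset.Icc 1 n, ((2 * (j : ℝ) - 1 - α) / 2) ^ 2)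
            * ((2 * ((n : ℝ) + 1) - 1 - α) / 2) ^ 2 := by
      rw [Finset.prod_Icc_succ_top (by omega : 1 ≤ n + 1)]
      push_cast
      ring
    have hAnn : 0 ≤ ∏ j ∈ Finset.Icc 1 n, ((2 * (j : ℝ) - 1 - α) / 2) ^ 2 :=
      Finset.prod_nonneg fun j _ => sq_nonneg _
    calc (∏ j ∈ Finset.Icc 1 (n + 1), ((2 * (j : ℝ) - 1 - α) / 2) ^ 2)
          * ∫ x : ℝ, x ^ (α - 2 * (n + 1 : ℕ)) * ‖f x‖ ^ 2
        = (∏ j ∈ Finset.Icc 1 n, ((2 * (j : ℝ) - 1 - α) / 2) ^ 2)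
            * (((α - 2 * n - 1) / 2) ^ 2 * ∫ x : ℝ, x ^ (α - 2 * ((n : ℝ) + 1)) * ‖f x‖ ^ 2) := by
          rw [hprodsplit, hcoef]
          push_cast
          ring
      _ ≤ (∏ j ∈ Finset.Icc 1 n, ((2 * (j : ℝ) - 1 - α) / 2) ^ 2)
            * ∫ x : ℝ, x ^ (α - 2 * n) * ‖deriv f x‖ ^ 2 :=
          mul_le_mul_of_nonneg_left hst hAnn
      _ ≤ ∫ x : ℝ, x ^ α * ‖iteratedDeriv n (deriv f) x‖ ^ 2 := hIH
      _ = ∫ x : ℝ, x ^ α * ‖iteratedDeriv (n + 1) f x‖ ^ 2 := by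
          rw [← iteratedDeriv_succ']

lemma aux_main_strict (m : ℕ) (hm : 1 ≤ m) (α : ℝ)
    (hα : ∀ j : ℕ, 1 ≤ j → j ≤ m → α ≠ 2 * (j : ℝ) - 1)
    (f : ℝ → H) (hf : ContDiff ℝ ∞ f) (hcs : HasCompactSupport f)
    (hpos : tsupport f ⊆ Set.Ioi 0) (hne : f ≠ 0) :
    (∏ j ∈ Finset.Icc 1 m, ((2 * (j : ℝ) - 1 - α) / 2) ^ 2)
        * (∫ x : ℝ, x ^ (α - 2 * m) * ‖f x‖ ^ 2)
      < ∫ x : ℝ, x ^ α * ‖iteratedDeriv m f x‖ ^ 2 := by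
  obtain ⟨k, rfl⟩ : ∃ k, m = k + 1 := ⟨m - 1, by omega⟩
  have hf' : ContDiff ℝ ∞ (deriv f) := (contDiff_infty_iff_deriv.mp hf).2
  have hcs' : HasCompactSupport (deriv f) := hcs.deriv
  have hts' : tsupport (deriv f) ⊆ Set.Ioi 0 :=
    (closure_minimal support_deriv_subset (isClosed_tsupport f)).trans hpos
  have hIH := aux_main_ge k α (deriv f) hf' hcs' hts'
  have hst := aux_step_strict (α - 2 * k) f hf hcs hpos hne
  rw [show α - 2 * k - 2 = α - 2 * ((k : ℝ) + 1) by ring] at hst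
  have hApos : 0 < ∏ j ∈ Finset.Icc 1 k, ((2 * (j : ℝ) - 1 - α) / 2) ^ 2 := by
    apply Finset.prod_pos
    intro j hj
    obtain ⟨hj1, hj2⟩ := Finset.mem_Icc.mp hj
    have hne' : (2 * (j : ℝ) - 1 - α) / 2 ≠ 0 := by
      intro h
      have : α = 2 * (j : ℝ) - 1 := by field_simp at h; linarith
      exact hα j hj1 (by omega) this
    exact lt_of_le_of_ne (sq_nonneg _) (Ne.symm (pow_ne_zero 2 hne'))
  have hcoef : ((2 * ((k : ℝ) + 1) - 1 - α) / 2) ^ 2 = ((α - 2 * k - 1) / 2) ^ 2 := by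
    rw [show (2 * ((k : ℝ) + 1) - 1 - α) / 2 = -((α - 2 * k - 1) / 2) by ring, neg_sq]
  have hprodsplit :
      (∏ j ∈ Finset.Icc 1 (k + 1), ((2 * (j : ℝ) - 1 - α) / 2) ^ 2)
        = (∏ j ∈ Finset.Icc 1 k, ((2 * (j : ℝ) - 1 - α) / 2) ^ 2)
          * ((2 * ((k : ℝ) + 1) - 1 - α) / 2) ^ 2 := by
    rw [Finset.prod_Icc_succ_top (by omega : 1 ≤ k + 1)]
    push_cast
    ring
  calc (∏ j ∈ Finset.Icc 1 (k + 1), ((2 * (j : ℝ) - 1 - α) / 2) ^ 2)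
        * ∫ x : ℝ, x ^ (α - 2 * (k + 1 : ℕ)) * ‖f x‖ ^ 2
      = (∏ j ∈ Finset.Icc 1 k, ((2 * (j : ℝ) - 1 - α) / 2) ^ 2)
          * (((α - 2 * k - 1) / 2) ^ 2 * ∫ x : ℝ, x ^ (α - 2 * ((k : ℝ) + 1)) * ‖f x‖ ^ 2) := by
        rw [hprodsplit, hcoef]
        push_cast
        ring
    _ < (∏ j ∈ Finset.Icc 1 k, ((2 * (j : ℝ) - 1 - α) / 2) ^ 2)
          * ∫ x : ℝ, x ^ (α - 2 * k) * ‖deriv f x‖ ^ 2 :=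
        mul_lt_mul_of_pos_left hst hApos
    _ ≤ ∫ x : ℝ, x ^ α * ‖iteratedDeriv k (deriv f) x‖ ^ 2 := hIH
    _ = ∫ x : ℝ, x ^ α * ‖iteratedDeriv (k + 1) f x‖ ^ 2 := by
        rw [← iteratedDeriv_succ']

end BirmanAux

open MeasureTheory BirmanAux in
theorem vector_valued_power_weighted_birman
    (H : Type*) [NormedAddCommGroup H] [InnerProductSpace ℂ H] [CompleteSpace H]
    [TopologicalSpace.SeparableSpace H]
    (m : ℕ) (hm : 1 ≤ m) (α : ℝ)
    (hα : ∀ j : ℕ, 1 ≤ j → j ≤ m → α ≠ 2 * (j : ℝ) - 1)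
    (a : ℝ) (b : EReal) (ha : 0 ≤ a) (hab : (a : EReal) < b)
    (f : ℝ → H) (hf : ContDiff ℝ (⊤ : ℕ∞) f) (hsupp : HasCompactSupport f)
    (hsub : tsupport f ⊆ {x : ℝ | a < x ∧ (x : EReal) < b}) :
    (∫ x in {x : ℝ | a < x ∧ (x : EReal) < b}, x ^ α * ‖iteratedDeriv m f x‖ ^ 2)
        ≥ (∏ j ∈ Finset.Icc 1 m, ((2 * (j : ℝ) - 1 - α) / 2) ^ 2)
            * ∫ x in {x : ℝ | a < x ∧ (x : EReal) < b}, x ^ (α - 2 * m) * ‖f x‖ ^ 2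
    ∧ ((∫ x in {x : ℝ | a < x ∧ (x : EReal) < b}, x ^ α * ‖iteratedDeriv m f x‖ ^ 2)
          = (∏ j ∈ Finset.Icc 1 m, ((2 * (j : ℝ) - 1 - α) / 2) ^ 2)
              * ∫ x in {x : ℝ | a < x ∧ (x : EReal) < b}, x ^ (α - 2 * m) * ‖f x‖ ^ 2
        ↔ ∀ x : ℝ, a < x → (x : EReal) < b → f x = 0) := by
  set S : Set ℝ := {x : ℝ | a < x ∧ (x : EReal) < b} with hS
  have hf' : ContDiff ℝ ∞ f := hf.of_le (by simp)
  have hpos : tsupport f ⊆ Set.Ioi 0 := fun x hx => lt_of_le_of_lt ha (hsub hx).1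
  -- integrand vanishing off S
  have hvan1 : ∀ x, x ∉ S → x ^ α * ‖iteratedDeriv m f x‖ ^ 2 = 0 := by
    intro x hx
    have hx' : x ∉ tsupport f := fun h => hx (hsub h)
    have : iteratedDeriv m f x = 0 :=
      image_eq_zero_of_notMem_tsupport fun h => hx' (aux_tsupport_iteratedDeriv m f h)
    simp [this]
  have hvan2 : ∀ x, x ∉ S → x ^ (α - 2 * m) * ‖f x‖ ^ 2 = 0 := by
    intro x hx
    have hx' : x ∉ tsupport f := fun h => hx (hsub h)
    simp [image_eq_zero_of_notMem_tsupport hx']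
  have he1 : (∫ x in S, x ^ α * ‖iteratedDeriv m f x‖ ^ 2)
      = ∫ x : ℝ, x ^ α * ‖iteratedDeriv m f x‖ ^ 2 :=
    setIntegral_eq_integral_of_forall_compl_eq_zero hvan1
  have he2 : (∫ x in S, x ^ (α - 2 * m) * ‖f x‖ ^ 2)
      = ∫ x : ℝ, x ^ (α - 2 * m) * ‖f x‖ ^ 2 :=
    setIntegral_eq_integral_of_forall_compl_eq_zero hvan2
  constructor
  · rw [he1, he2]
    exact aux_main_ge m α f hf' hsupp hpos
  · constructor
    · intro heq x hx1 hx2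
      by_contra hfx
      have hne : f ≠ 0 := fun h => hfx (by rw [h]; rfl)
      have := aux_main_strict m hm α hα f hf' hsupp hpos hne
      rw [he1, he2] at heq
      linarith [heq ▸ this]
    · intro hz
      have hf0 : f = 0 := by
        funext x
        by_cases hx : x ∈ S
        · exact hz x hx.1 hx.2
        · exact image_eq_zero_of_notMem_tsupport fun h => hx (hsub h)
      have hts : tsupport f = ∅ := by
        rw [hf0]
        simp [tsupport]
      have hiz : ∀ x, iteratedDeriv m f x = 0 := fun x =>
        image_eq_zero_of_notMem_tsupport fun h => by
          have hmem := aux_tsupport_iteratedDeriv m f h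
          rw [hts] at hmem
          exact absurd hmem (Set.notMem_empty x)
      have hI1 : (∫ x in S, x ^ α * ‖iteratedDeriv m f x‖ ^ 2) = 0 := by
        apply integral_eq_zero_of_ae
        filter_upwards with x
        simp [hiz x]
      have hI2 : (∫ x in S, x ^ (α - 2 * m) * ‖f x‖ ^ 2) = 0 := by
        apply integral_eq_zero_of_ae
        filter_upwards with x
        simp [hf0]
      rw [hI1, hI2, mul_zero]
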